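/- arXiv:1203.6053 — 3 statements merged into one kernel-verified Lean document; each statement's English description precedes it below -/
import Mathlib

section
/- Let g ≥ 2 and k ≥ 1 be integers and let m₁,…,m_k be positive integers with ∑_{i=1}^k m_i = 2g − 2. Then for all natural numbers n₁,…,n_k with n_i ≤ m_i for every i and ∑_{i=1}^k n_i = g − 1, one has the inequality of rational numbers ∑_{i=1}^k n_i(n_i+1)/(2(m_i+1)) ≥ g/4 + (1/8)·(−2 + ∑_{i : m_i even} m_i/(m_i+1) + #{i : m_i is odd}). -/
/-!
Both sides are sums over the zeros, and the inequality already holds term by term once the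
constant `g / 4 - 1 / 4` is distributed as `n_i / 2 - m_i / 8` (using `∑ n_i = g - 1` and
`∑ m_i = 2g - 2`). Indeed
`n (n + 1) / (2 (m + 1)) - (n / 2 - m / 8) = ((2n - m)² + m) / (8 (m + 1))`,
and `(2n - m)² ≥ 0`, with `(2n - m)² ≥ 1` when `m` is odd; this gives the summand
`m / (m + 1)` for even `m` and `1` for odd `m` in the lower bound.
-/

open Finset

/-- The summand of `∑_{m_i even} m_i / (m_i + 1) + #{i : m_i odd}` contributed by `m_i = m`. -/
def parityWeight (m : ℕ) : ℚ := if Even m then m / (m + 1) else 1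

lemma one_le_sq_of_odd {x : ℤ} (hx : Odd x) : 1 ≤ x ^ 2 := by
  have hx0 : x ≠ 0 := by rintro rfl; simp at hx
  exact one_le_sq_iff_one_le_abs x |>.mpr (Int.one_le_abs hx0)

lemma mul_add_one_div_eq {K : Type*} [Field K] [CharZero K] {m : K} (n : K) (hm : m + 1 ≠ 0) :
    n * (n + 1) / (2 * (m + 1)) = n / 2 - m / 8 + ((2 * n - m) ^ 2 + m) / (8 * (m + 1)) := by
  field_simp
  ring

lemma parityWeight_le (m n : ℕ) : parityWeight m ≤ ((2 * n - m : ℚ) ^ 2 + m) / (m + 1) := by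
  have hm : (0 : ℚ) < m + 1 := by positivity
  unfold parityWeight
  split_ifs with h
  · gcongr
    exact le_add_of_nonneg_left (sq_nonneg _)
  · have hodd : Odd (2 * (n : ℤ) - m) :=
      (even_two_mul (n : ℤ)).sub_odd (Int.odd_coe_nat m |>.mpr (Nat.not_even_iff_odd.mp h))
    have hsq : (1 : ℚ) ≤ (2 * n - m : ℚ) ^ 2 := by exact_mod_cast one_le_sq_of_odd hodd
    rw [le_div_iff₀ hm]
    linarith

lemma add_parityWeight_div_le (m n : ℕ) :
    (n : ℚ) / 2 - m / 8 + parityWeight m / 8 ≤ n * (n + 1) / (2 * (m + 1)) := by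
  rw [mul_add_one_div_eq _ (by positivity), mul_comm 8, ← div_div]
  gcongr
  exact parityWeight_le m n

lemma sum_parityWeight {ι : Type*} (s : Finset ι) (m : ι → ℕ) :
    ∑ i ∈ s, parityWeight (m i) = ∑ i ∈ s with Even (m i), (m i : ℚ) / (m i + 1)
      + #{i ∈ s | Odd (m i)} := by
  simp only [parityWeight, sum_ite, Nat.not_even_iff_odd, sum_const, nsmul_one]

lemma sum_add_parityWeight_div_le {ι : Type*} (s : Finset ι) (m n : ι → ℕ) :
    (∑ i ∈ s, (n i : ℚ)) / 2 - (∑ i ∈ s, (m i : ℚ)) / 8 + (∑ i ∈ s, parityWeight (m i)) / 8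
      ≤ ∑ i ∈ s, (n i : ℚ) * (n i + 1) / (2 * (m i + 1)) := by
  simp only [sum_div, ← sum_sub_distrib, ← sum_add_distrib]
  exact sum_le_sum fun i _ => add_parityWeight_div_le (m i) (n i)

theorem upper_bound_core_general (g k : ℕ) (m : Fin k → ℕ)
    (hmsum : ∑ i, m i = 2 * g - 2)
    (n : Fin k → ℕ) (hnsum : ∑ i, n i = g - 1) :
    (g : ℚ) / 4 + (1 / 8) *
        (-2 + (∑ i ∈ Finset.univ.filter (fun i => Even (m i)), (m i : ℚ) / ((m i : ℚ) + 1))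
          + ((Finset.univ.filter (fun i => Odd (m i))).card : ℚ))
      ≤ ∑ i, (n i : ℚ) * ((n i : ℚ) + 1) / (2 * ((m i : ℚ) + 1)) := by
  have hn : ∑ i, (n i : ℚ) = (g - 1 : ℕ) := by rw [← hnsum, Nat.cast_sum]
  have hm : ∑ i, (m i : ℚ) = 2 * (g - 1 : ℕ) := by
    rw [← Nat.cast_sum, hmsum, show 2 * g - 2 = 2 * (g - 1) by omega, Nat.cast_mul, Nat.cast_two]
  -- `g - 1` is truncated in `ℕ`, so only `g ≤ (g - 1) + 1` survives the cast
  have hg : (g : ℚ) ≤ (g - 1 : ℕ) + 1 := by exact_mod_cast (show g ≤ g - 1 + 1 by omega)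
  have key := sum_add_parityWeight_div_le univ m n
  rw [hn, hm, sum_parityWeight] at key
  linarith

/-- Let `g ≥ 2`, `k ≥ 1`, and `m₁,…,m_k` positive integers with `∑ m_i = 2g − 2`.
Then for all natural numbers `n₁,…,n_k` with `n_i ≤ m_i` and `∑ n_i = g − 1`,
`∑ n_i(n_i+1)/(2(m_i+1)) ≥ g/4 + (1/8)(−2 + ∑_{m_i even} m_i/(m_i+1) + #{i : m_i odd})`. -/
theorem upper_bound_core (g k : ℕ) (hg : 2 ≤ g) (hk : 1 ≤ k) (m : Fin k → ℕ)
    (hm : ∀ i, 0 < m i) (hmsum : ∑ i, m i = 2 * g - 2)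
    (n : Fin k → ℕ) (hn : ∀ i, n i ≤ m i) (hnsum : ∑ i, n i = g - 1) :
    (g : ℚ) / 4 + (1 / 8) *
        (-2 + (∑ i ∈ Finset.univ.filter (fun i => Even (m i)), (m i : ℚ) / ((m i : ℚ) + 1))
          + ((Finset.univ.filter (fun i => Odd (m i))).card : ℚ))
      ≤ ∑ i, (n i : ℚ) * ((n i : ℚ) + 1) / (2 * ((m i : ℚ) + 1)) :=
  upper_bound_core_general g k m hmsum n hnsum
end

section
/- Let g ≥ 2 and k ≥ 1 be integers and let m₁,…,m_k be positive integers with ∑_{i=1}^k m_i = 2g − 2. Then there exist natural numbers n₁,…,n_k with n_i ≤ m_i for every i and ∑_{i=1}^k n_i = g − 1 such that ∑_{i=1}^k n_i(n_i+1)/(2(m_i+1)) = g/4 + (1/8)·(−2 + ∑_{i : m_i even} m_i/(m_i+1) + #{i : m_i is odd}). Concretely, one may take n_i = m_i/2 whenever m_i is even, and split the indices with m_i odd (their number is even) into two halves of equal size, taking n_i = (m_i−1)/2 on one half and n_i = (m_i+1)/2 on the other. -/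
/-!
Take `n_i` to be `m_i / 2` rounded down or up. For such a rounding the summand satisfies
`n(n+1)/(2(m+1)) = m/8 + (2n - m)/4 + w(m)/8`, where `w(m) = m/(m+1)` for even `m` and `w(m) = 1`
for odd `m` (`roundingDefect`). Rounding up at exactly half of the odd `m_i` (their number is even
because `∑ m_i` is) makes `∑ (2 n_i - m_i) = 0`, so the sum collapses to `(2g - 2)/8 + (∑ w(m_i))/8`.
-/

open Finset

def roundingDefect (m : ℕ) : ℚ := if Even m then m / (m + 1) else 1

theorem sum_roundingDefect {ι : Type*} [Fintype ι] (m : ι → ℕ) :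
    ∑ i, roundingDefect (m i) =
      ∑ i ∈ univ.filter (fun i => Even (m i)), (m i : ℚ) / (m i + 1) +
        #(univ.filter (fun i => Odd (m i))) := by
  simp only [roundingDefect, sum_ite, sum_const, nsmul_one, Nat.not_even_iff_odd]

theorem half_term_eq_of_round {m n : ℕ} (h : n = m / 2 ∨ n = (m + 1) / 2) :
    (n : ℚ) * (n + 1) / (2 * (m + 1)) = m / 8 + (2 * n - m) / 4 + roundingDefect m / 8 := by
  rcases Nat.even_or_odd' m with ⟨t, rfl | rfl⟩
  · rw [show n = t by omega]
    simp only [roundingDefect, even_two_mul, if_true]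
    push_cast
    field_simp
    ring
  · obtain hn | hn : n = t ∨ n = t + 1 := by omega
    all_goals
      simp only [roundingDefect, Nat.not_even_bit1, if_false, hn]
      push_cast
      field_simp
      ring

theorem exists_round_half_of_even_sum {ι : Type*} [Fintype ι] [DecidableEq ι] (m : ι → ℕ)
    (h : Even (∑ i, m i)) :
    ∃ n : ι → ℕ, (∀ i, n i = m i / 2 ∨ n i = (m i + 1) / 2) ∧ 2 * ∑ i, n i = ∑ i, m i := by
  set O := univ.filter (fun i => Odd (m i))
  obtain ⟨H, hHO, hH⟩ := exists_subset_card_eq (Nat.div_le_self #O 2)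
  have hcard : #(O \ H) = #H := by
    have : Even #O := (even_sum_iff_even_card_odd m).mp h
    rw [card_sdiff_of_subset hHO]
    grind
  set n : ι → ℕ := fun i => if i ∈ H then (m i + 1) / 2 else m i / 2
  refine ⟨n, fun i => by by_cases hi : i ∈ H <;> simp [n, hi], ?_⟩
  have double_eq (i : ι) :
      2 * n i + (if i ∈ O \ H then 1 else 0) = m i + (if i ∈ H then 1 else 0) := by
    by_cases hi : i ∈ H
    · obtain ⟨t, ht⟩ : Odd (m i) := (mem_filter.mp (hHO hi)).2
      simp [n, hi]
      omega
    · rcases Nat.even_or_odd' (m i) with ⟨t, ht | ht⟩ <;> simp [n, hi, O, ht]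
      omega
  have hsum := sum_congr rfl fun i (_ : i ∈ univ) => double_eq i
  simp only [sum_add_distrib, ← mul_sum, sum_boole, filter_mem_eq_inter, univ_inter,
    Nat.cast_id] at hsum
  omega

theorem upper_bound_attained_general (g k : ℕ) (hg : 2 ≤ g) (m : Fin k → ℕ)
    (hmsum : ∑ i, m i = 2 * g - 2) :
    ∃ n : Fin k → ℕ, (∀ i, n i ≤ m i) ∧ (∑ i, n i = g - 1) ∧
      ∑ i, (n i : ℚ) * ((n i : ℚ) + 1) / (2 * ((m i : ℚ) + 1)) =
        (g : ℚ) / 4 + (1 / 8) *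
          (-2 + (∑ i ∈ Finset.univ.filter (fun i => Even (m i)), (m i : ℚ) / ((m i : ℚ) + 1))
            + ((Finset.univ.filter (fun i => Odd (m i))).card : ℚ)) := by
  obtain ⟨n, hround, hn⟩ := exists_round_half_of_even_sum m ⟨g - 1, by omega⟩
  refine ⟨n, fun i => by rcases hround i with h | h <;> omega, by omega, ?_⟩
  have hmQ : ∑ i, (m i : ℚ) + 2 = 2 * g := by exact_mod_cast (by omega : ∑ i, m i + 2 = 2 * g)
  have hnQ : 2 * ∑ i, (n i : ℚ) = ∑ i, (m i : ℚ) := by exact_mod_cast hn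
  rw [sum_congr rfl fun i _ => half_term_eq_of_round (hround i), add_assoc, ← sum_roundingDefect]
  simp only [sum_add_distrib, ← sum_div, sum_sub_distrib, ← mul_sum]
  linear_combination (1 / 8 : ℚ) * hmQ + (1 / 4 : ℚ) * hnQ

/-- Let `g ≥ 2`, `k ≥ 1`, and `m₁,…,m_k` positive integers with `∑ m_i = 2g − 2`.
Then there exist natural numbers `n₁,…,n_k` with `n_i ≤ m_i` and `∑ n_i = g − 1`
such that `∑ n_i(n_i+1)/(2(m_i+1))
  = g/4 + (1/8)(−2 + ∑_{m_i even} m_i/(m_i+1) + #{i : m_i odd})`. -/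
theorem upper_bound_attained (g k : ℕ) (hg : 2 ≤ g) (hk : 1 ≤ k) (m : Fin k → ℕ)
    (hm : ∀ i, 0 < m i) (hmsum : ∑ i, m i = 2 * g - 2) :
    ∃ n : Fin k → ℕ, (∀ i, n i ≤ m i) ∧ (∑ i, n i = g - 1) ∧
      ∑ i, (n i : ℚ) * ((n i : ℚ) + 1) / (2 * ((m i : ℚ) + 1)) =
        (g : ℚ) / 4 + (1 / 8) *
          (-2 + (∑ i ∈ Finset.univ.filter (fun i => Even (m i)), (m i : ℚ) / ((m i : ℚ) + 1))
            + ((Finset.univ.filter (fun i => Odd (m i))).card : ℚ)) :=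
  upper_bound_attained_general g k hg m hmsum
end

section
/- Let H be an additive submonoid of the natural numbers ℕ whose gap set G = ℕ \ H is finite of cardinality g. Then ∑_{n ∈ G} n ≤ g², equivalently the weight w(H) = (∑_{n ∈ G} n) − g(g+1)/2 satisfies w(H) ≤ g(g−1)/2; moreover equality holds if and only if 2 ∈ H. -/
/-!
For a gap `n`, the reflection `a ↦ n - a` maps elements of `H` in `[0, n]` to gaps in `[0, n]`
(as `a + (n - a) = n ∉ H`), so at least half of `[0, n]` consists of gaps: `n + 1 ≤ 2 c(n)`, where
`c(n)` is the number of gaps `≤ n`, i.e. the rank of `n` among the gaps. Summing over the gaps,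
`∑ (n + 1) ≤ 2 ∑ c(n) = g (g + 1)`, which is `∑ n ≤ g²`. If `2 ∈ H`, all gaps are odd and
`m ↦ m - 1` maps gaps to elements of `H`, so `n + 1 = 2 c(n)` for every gap and equality holds.
If `2 ∉ H`, the bound at the gap `2` is strict by parity, and so is the total.
-/

open Finset

theorem Finset.two_mul_sum_card_filter_le {α : Type*} [LinearOrder α] (s : Finset α) :
    2 * ∑ n ∈ s, #{m ∈ s | m ≤ n} = #s * (#s + 1) := by
  induction s using Finset.induction_on_max with
  | empty => simp
  | insert a s hlt ih =>
    have ha : a ∉ s := fun h => (hlt a h).false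
    have htop : #{m ∈ insert a s | m ≤ a} = #s + 1 := by
      rw [filter_true_of_mem fun m hm => ?_, card_insert_of_notMem ha]
      rcases mem_insert.1 hm with rfl | hm
      exacts [le_rfl, (hlt m hm).le]
    have hrest : ∀ n ∈ s, #{m ∈ insert a s | m ≤ n} = #{m ∈ s | m ≤ n} := fun n hn => by
      rw [filter_insert, if_neg (hlt n hn).not_ge]
    rw [sum_insert ha, htop, sum_congr rfl hrest, mul_add, ih, card_insert_of_notMem ha]
    ring

namespace AddSubmonoid

variable (H : AddSubmonoid ℕ) [DecidablePred (· ∈ H)]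

theorem card_Iic_filter_mem_add_card_filter_not_mem (n : ℕ) :
    #{a ∈ Iic n | a ∈ H} + #{a ∈ Iic n | a ∉ H} = n + 1 := by
  rw [card_filter_add_card_filter_not, Nat.card_Iic]

theorem card_Iic_filter_mem_le_of_not_mem {n : ℕ} (hn : n ∉ H) :
    #{a ∈ Iic n | a ∈ H} ≤ #{a ∈ Iic n | a ∉ H} := by
  refine card_le_card_of_injOn (n - ·) (fun a ha => ?_) fun a ha b hb hab => ?_
  · simp only [coe_filter, mem_Iic, Set.mem_ofPred_eq] at ha ⊢
    refine ⟨Nat.sub_le n a, fun hmem => hn ?_⟩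
    simpa [Nat.add_sub_cancel' ha.1] using H.add_mem ha.2 hmem
  · simp only [coe_filter, mem_Iic, Set.mem_ofPred_eq] at ha hb
    simp only at hab
    omega

theorem card_Iic_filter_not_mem_le_of_two_mem (h2 : 2 ∈ H) (n : ℕ) :
    #{a ∈ Iic n | a ∉ H} ≤ #{a ∈ Iic n | a ∈ H} := by
  have heven : ∀ k, 2 * k ∈ H := fun k => by simpa [mul_comm] using H.nsmul_mem h2 k
  have hodd : ∀ m, m ∉ H → ∃ k, m = 2 * k + 1 := fun m hm =>
    (Nat.even_or_odd m).resolve_left fun ⟨k, hk⟩ => hm (by simpa [hk, two_mul] using heven k)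
  refine card_le_card_of_injOn (· - 1) (fun m hm => ?_) fun a ha b hb hab => ?_
  · simp only [coe_filter, mem_Iic, Set.mem_ofPred_eq] at hm ⊢
    obtain ⟨k, rfl⟩ := hodd m hm.2
    exact ⟨by omega, by simpa using heven k⟩
  · simp only [coe_filter, mem_Iic, Set.mem_ofPred_eq] at ha hb
    obtain ⟨k, rfl⟩ := hodd a ha.2
    obtain ⟨l, rfl⟩ := hodd b hb.2
    simp only at hab
    omega

theorem add_one_le_two_mul_card_Iic_filter_not_mem {n : ℕ} (hn : n ∉ H) :
    n + 1 ≤ 2 * #{a ∈ Iic n | a ∉ H} := by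
  have := H.card_Iic_filter_mem_add_card_filter_not_mem n
  have := H.card_Iic_filter_mem_le_of_not_mem hn
  omega

theorem two_mul_card_Iic_filter_not_mem_le_of_two_mem (h2 : 2 ∈ H) (n : ℕ) :
    2 * #{a ∈ Iic n | a ∉ H} ≤ n + 1 := by
  have := H.card_Iic_filter_mem_add_card_filter_not_mem n
  have := H.card_Iic_filter_not_mem_le_of_two_mem h2 n
  omega

end AddSubmonoid

/-- Let `H` be an additive submonoid of `ℕ` whose gap set `G = ℕ \ H` is finite
of cardinality `g`. Then `∑_{n ∈ G} n ≤ g²`, with equality if and only if `2 ∈ H`. -/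
theorem weight_bound (H : AddSubmonoid ℕ) (g : ℕ)
    (hfin : {n : ℕ | n ∉ H}.Finite) (hcard : hfin.toFinset.card = g) :
    (∑ n ∈ hfin.toFinset, n) ≤ g ^ 2 ∧
      ((∑ n ∈ hfin.toFinset, n) = g ^ 2 ↔ (2 : ℕ) ∈ H) := by
  classical
  set G := hfin.toFinset
  have hmem : ∀ n, n ∈ G ↔ n ∉ H := fun n => by simp [G]
  have hrank : ∀ n, #{m ∈ G | m ≤ n} = #{a ∈ Iic n | a ∉ H} := fun n => by
    congr 1; ext m; simp [G, and_comm]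
  have hranks : 2 * ∑ n ∈ G, #{a ∈ Iic n | a ∉ H} = g * (g + 1) := by
    simp_rw [← hrank]; rw [G.two_mul_sum_card_filter_le, hcard]
  have hshift : ∑ n ∈ G, (n + 1) = ∑ n ∈ G, n + g := by
    rw [sum_add_distrib, sum_const, hcard, smul_eq_mul, mul_one]
  have hgap : ∀ n ∈ G, n + 1 ≤ 2 * #{a ∈ Iic n | a ∉ H} := fun n hn =>
    H.add_one_le_two_mul_card_Iic_filter_not_mem ((hmem n).1 hn)
  have hle : ∑ n ∈ G, (n + 1) ≤ 2 * ∑ n ∈ G, #{a ∈ Iic n | a ∉ H} := by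
    rw [mul_sum]; exact sum_le_sum hgap
  refine ⟨by nlinarith, fun heq => ?_, fun h2 => ?_⟩
  · by_contra h2
    have hlt : ∑ n ∈ G, (n + 1) < 2 * ∑ n ∈ G, #{a ∈ Iic n | a ∉ H} := by
      rw [mul_sum]
      refine sum_lt_sum hgap ⟨2, (hmem 2).2 h2, ?_⟩
      have := hgap 2 ((hmem 2).2 h2)
      omega
    nlinarith
  · have htight : ∑ n ∈ G, (n + 1) = 2 * ∑ n ∈ G, #{a ∈ Iic n | a ∉ H} := by
      rw [mul_sum]
      exact sum_congr rfl fun n hn =>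
        (hgap n hn).antisymm (H.two_mul_card_Iic_filter_not_mem_le_of_two_mem h2 n)
    nlinarith
end
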